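/- arXiv:1403.3170 — 8 statements merged into one kernel-verified Lean document; each statement's English description precedes it below -/
import Mathlib

section
/- Let ⊘ be a linear left Kronecker quotient over a field F, with associated linear maps q_{A,s,t}(M) := A ⊘ M. Then ⊘ satisfies (A ⊘ M)^T = A^T ⊘ M^T for all m,n,s,t ∈ ℕ, all A ∈ M_nz(F,m,n) and all M ∈ M(F,ms,nt) if and only if for all m,n,s,t and all A ∈ M_nz(F,m,n): whenever R ∈ ker(q_{A,s,t}) then R^T ∈ ker(q_{A^T,t,s}). -/
/-!
Theorem (linear Kronecker quotients, (i)): a linear left Kronecker quotient `⊘`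
satisfies (Q1): `(A ⊘ M)ᵀ = Aᵀ ⊘ Mᵀ` for all `m,n,s,t`, all nonzero
`A ∈ M(F,m,n)` and all `M ∈ M(F,ms,nt)`, if and only if
`R ∈ ker q_{A,s,t} → Rᵀ ∈ ker q_{Aᵀ,t,s}` for all such `A`.
-/

open Matrix
open scoped Kronecker

theorem linear_kronecker_quotient_transpose_iff
    {F : Type*} [Field F]
    (q : ∀ (m n s t : ℕ), Matrix (Fin m) (Fin n) F →
      Matrix (Fin m × Fin s) (Fin n × Fin t) F → Matrix (Fin s) (Fin t) F)
    (hquot : ∀ (m n s t : ℕ) (A : Matrix (Fin m) (Fin n) F), A ≠ 0 →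
      ∀ B : Matrix (Fin s) (Fin t) F, q m n s t A (A ⊗ₖ B) = B)
    (hlin : ∀ (m n s t : ℕ) (A : Matrix (Fin m) (Fin n) F), A ≠ 0 →
      IsLinearMap F (q m n s t A)) :
    (∀ (m n s t : ℕ) (A : Matrix (Fin m) (Fin n) F), A ≠ 0 →
      ∀ M : Matrix (Fin m × Fin s) (Fin n × Fin t) F,
        (q m n s t A M)ᵀ = q n m t s Aᵀ Mᵀ) ↔
    (∀ (m n s t : ℕ) (A : Matrix (Fin m) (Fin n) F), A ≠ 0 →
      ∀ R : Matrix (Fin m × Fin s) (Fin n × Fin t) F,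
        q m n s t A R = 0 → q n m t s Aᵀ Rᵀ = 0) := by
  constructor
  · intro h m n s t A hA R hR
    rw [← h m n s t A hA R, hR, transpose_zero]
  · intro h m n s t A hA M
    have hAT : Aᵀ ≠ 0 := fun c => hA (by simpa using congrArg transpose c)
    set B := q m n s t A M with hB
    set R := M - A ⊗ₖ B with hRdef
    have hqR : q m n s t A R = 0 := by
      have := (hlin m n s t A hA).map_sub M (A ⊗ₖ B)
      rw [← hRdef] at this
      rw [this, hquot m n s t A hA B, ← hB, sub_self]
    have hRT : q n m t s Aᵀ Rᵀ = 0 := h m n s t A hA R hqR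
    have hM : Mᵀ = Aᵀ ⊗ₖ Bᵀ + Rᵀ := by
      rw [hRdef, transpose_sub, ← kroneckerMap_transpose]
      abel
    rw [hM, (hlin n m t s Aᵀ hAT).map_add, hquot n m t s Aᵀ hAT, hRT, add_zero]
end

section
/- Let ⊘ be a linear left Kronecker quotient over a field F. Then for all m,n,s,t ∈ ℕ and every A ∈ M_nz(F,m,n) there exist (st)² matrices Q_{u,v,u',v'}(A) ∈ M(F,m,n), indexed by u,u' ∈ {1,…,s} and v,v' ∈ {1,…,t}, satisfying Q_{u,v,u',v'}(A) ∘ A = δ_{u,u'}·δ_{v,v'} (a scalar, via the partial Frobenius product with s=t=1), such that for all M ∈ M(F,ms,nt): A ⊘ M = Σ_{u,u'=1}^{s} Σ_{v,v'=1}^{t} e_{u',s} e_{u,s}^T (Q_{u,v,u',v'}(A) ∘ M) e_{v,t} e_{v',t}^T, where e_{i,m} denotes the i-th standard basis column vector of F^m. -/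
/-!
Fix `A ≠ 0` and let `L = (A ⊘ ·)`, a linear map. Expanding `M` in the matrix units
`E_{(j,u),(k,v)}` shows `(L M)_{u',v'} = ∑_{u,v} (Q u v u' v' ∘ M)_{u,v}` with
`(Q u v u' v')_{j,k} = (L E_{(j,u),(k,v)})_{u',v'}`, which is the asserted decomposition.
Since `Q ∘ (A ⊗ B) = (Q ∘ A) • B`, the same formula applied to `M = A ⊗ E_{u,v}` together
with `L (A ⊗ E_{u,v}) = E_{u,v}` gives `Q u v u' v' ∘ A = δ_{u,u'} δ_{v,v'}`.
-/

open Matrix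
open scoped Kronecker

/-- The partial Frobenius product `A ∘ M`:
`(A ∘ M)_{u,v} = ∑_{j,k} A_{j,k} M_{(j,u),(k,v)}`. -/
def pfrob {F : Type*} [Field F] {I J S T : Type*} [Fintype I] [Fintype J]
    (A : Matrix I J F) (M : Matrix (I × S) (J × T) F) : Matrix S T F :=
  Matrix.of fun u v => ∑ j, ∑ k, A j k * M (j, u) (k, v)

/-- The scalar (`s = t = 1`) partial Frobenius product. -/
def pfrobS {F : Type*} [Field F] {I J : Type*} [Fintype I] [Fintype J]
    (A M : Matrix I J F) : F := ∑ j, ∑ k, A j k * M j k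

section

variable {F : Type*} [Field F] {I J S T : Type*} [Fintype I] [Fintype J]

theorem pfrob_kronecker (Q A : Matrix I J F) (B : Matrix S T F) :
    pfrob Q (A ⊗ₖ B) = pfrobS Q A • B := by
  ext u v
  simp only [pfrob, pfrobS, of_apply, kroneckerMap_apply, Matrix.smul_apply, smul_eq_mul,
    Finset.sum_mul, mul_assoc]

variable [Fintype S] [Fintype T] [DecidableEq I] [DecidableEq J] [DecidableEq S] [DecidableEq T]

def pfrobCoeff (L : Matrix (I × S) (J × T) F →ₗ[F] Matrix S T F) (u : S) (v : T) (u' : S)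
    (v' : T) : Matrix I J F :=
  of fun j k => L (single (j, u) (k, v) 1) u' v'

theorem apply_eq_sum_pfrob_pfrobCoeff (L : Matrix (I × S) (J × T) F →ₗ[F] Matrix S T F)
    (M : Matrix (I × S) (J × T) F) (u' : S) (v' : T) :
    L M u' v' = ∑ u, ∑ v, pfrob (pfrobCoeff L u v u' v') M u v := by
  have hM : M = ∑ p, ∑ r, M p r • single p r (1 : F) := by
    simp only [smul_single, smul_eq_mul, mul_one]
    exact matrix_eq_sum_single M
  conv_lhs => rw [hM]
  simp only [map_sum, map_smul, Matrix.sum_apply, Matrix.smul_apply, smul_eq_mul,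
    Fintype.sum_prod_type_right, pfrob, pfrobCoeff, of_apply]
  refine Finset.sum_congr rfl fun u _ => ?_
  rw [Finset.sum_comm]
  simp only [mul_comm]

theorem eq_sum_single_mul_pfrob_mul_single (L : Matrix (I × S) (J × T) F →ₗ[F] Matrix S T F)
    (M : Matrix (I × S) (J × T) F) :
    L M = ∑ u, ∑ u', ∑ v, ∑ v',
      single u' u (1 : F) * pfrob (pfrobCoeff L u v u' v') M * single v v' (1 : F) := by
  ext a b
  simp only [apply_eq_sum_pfrob_pfrobCoeff L M a b, single_mul_mul_single, one_mul, mul_one,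
    Matrix.sum_apply, single_apply, ite_and, Finset.sum_ite_irrel, Finset.sum_ite_eq',
    Finset.mem_univ, if_true, Finset.sum_const_zero]

theorem pfrobS_pfrobCoeff_of_kronecker (L : Matrix (I × S) (J × T) F →ₗ[F] Matrix S T F)
    (A : Matrix I J F) (hL : ∀ B, L (A ⊗ₖ B) = B) (u u' : S) (v v' : T) :
    pfrobS (pfrobCoeff L u v u' v') A = if u = u' ∧ v = v' then 1 else 0 := by
  have h := apply_eq_sum_pfrob_pfrobCoeff L (A ⊗ₖ single u v 1) u' v'
  simp only [hL, pfrob_kronecker, Matrix.smul_apply, smul_eq_mul, single_apply] at h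
  simpa only [ite_and, mul_ite, mul_one, mul_zero, Finset.sum_ite_irrel, Finset.sum_ite_eq,
    Finset.mem_univ, if_true, Finset.sum_const_zero] using h.symm

end

theorem linear_kronecker_quotient_decomposition
    {F : Type*} [Field F]
    (q : ∀ (m n s t : ℕ), Matrix (Fin m) (Fin n) F →
      Matrix (Fin m × Fin s) (Fin n × Fin t) F → Matrix (Fin s) (Fin t) F)
    (hquot : ∀ (m n s t : ℕ) (A : Matrix (Fin m) (Fin n) F), A ≠ 0 →
      ∀ B : Matrix (Fin s) (Fin t) F, q m n s t A (A ⊗ₖ B) = B)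
    (hlin : ∀ (m n s t : ℕ) (A : Matrix (Fin m) (Fin n) F), A ≠ 0 →
      IsLinearMap F (q m n s t A)) :
    ∀ (m n s t : ℕ) (A : Matrix (Fin m) (Fin n) F), A ≠ 0 →
      ∃ Q : Fin s → Fin t → Fin s → Fin t → Matrix (Fin m) (Fin n) F,
        (∀ (u u' : Fin s) (v v' : Fin t),
          pfrobS (Q u v u' v') A = if u = u' ∧ v = v' then (1 : F) else 0) ∧
        (∀ M : Matrix (Fin m × Fin s) (Fin n × Fin t) F,
          q m n s t A M =
            ∑ u : Fin s, ∑ u' : Fin s, ∑ v : Fin t, ∑ v' : Fin t,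
              Matrix.single u' u (1 : F) * pfrob (Q u v u' v') M *
                Matrix.single v v' (1 : F)) := by
  intro m n s t A hA
  let L := IsLinearMap.mk' (q m n s t A) (hlin m n s t A hA)
  exact ⟨pfrobCoeff L, pfrobS_pfrobCoeff_of_kronecker L A (hquot m n s t A hA),
    eq_sum_single_mul_pfrob_mul_single L⟩
end

section
/- Let ⊘ be a uniform left Kronecker quotient over a field F realized by the matrices Q(A). Then for every A ∈ M_nz(F,m,n), every C ∈ M(F,m,n) and every B ∈ M(F,s,t): A ⊘ (C⊗B) = (Q(A) ∘ C) · B, where Q(A) ∘ C is a scalar (the partial Frobenius product with s=t=1). -/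
/-!
Theorem: for a uniform left Kronecker quotient `⊘` realized by the matrices
`Q(A)`: for every nonzero `A ∈ M(F,m,n)`, every `C ∈ M(F,m,n)` and every
`B ∈ M(F,s,t)`, `A ⊘ (C ⊗ B) = (Q(A) ∘ C) • B`, where `Q(A) ∘ C` is a scalar
(the partial Frobenius product with `s = t = 1`).
-/

open Matrix
open scoped Kronecker

theorem uniform_kronecker_quotient_of_kronecker
    {F : Type*} [Field F]
    (q : ∀ (m n s t : ℕ), Matrix (Fin m) (Fin n) F →
      Matrix (Fin m × Fin s) (Fin n × Fin t) F → Matrix (Fin s) (Fin t) F)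
    (Q : ∀ (m n : ℕ), Matrix (Fin m) (Fin n) F → Matrix (Fin m) (Fin n) F)
    (hquot : ∀ (m n s t : ℕ) (A : Matrix (Fin m) (Fin n) F), A ≠ 0 →
      ∀ B : Matrix (Fin s) (Fin t) F, q m n s t A (A ⊗ₖ B) = B)
    (hQnz : ∀ (m n : ℕ) (A : Matrix (Fin m) (Fin n) F), A ≠ 0 → Q m n A ≠ 0)
    (hQone : ∀ (m n : ℕ) (A : Matrix (Fin m) (Fin n) F), A ≠ 0 →
      pfrobS (Q m n A) A = 1)
    (hunif : ∀ (m n s t : ℕ) (A : Matrix (Fin m) (Fin n) F), A ≠ 0 →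
      ∀ M : Matrix (Fin m × Fin s) (Fin n × Fin t) F,
        q m n s t A M = pfrob (Q m n A) M) :
    ∀ (m n s t : ℕ) (A : Matrix (Fin m) (Fin n) F), A ≠ 0 →
      ∀ (C : Matrix (Fin m) (Fin n) F) (B : Matrix (Fin s) (Fin t) F),
        q m n s t A (C ⊗ₖ B) = pfrobS (Q m n A) C • B := by
  intro m n s t A hA C B
  rw [hunif m n s t A hA]
  ext u v
  simp [pfrob, pfrobS, Matrix.kroneckerMap_apply, Finset.sum_mul, mul_assoc]
end

section
/- Let ⊘ be a uniform left Kronecker quotient over a field F realized by the matrices Q(A). Then ⊘ satisfies (A ⊘ M)^T = A^T ⊘ M^T for all m,n,s,t ∈ ℕ, all A ∈ M_nz(F,m,n) and all M ∈ M(F,ms,nt) if and only if Q(A^T) = (Q(A))^T for all m,n and all A ∈ M_nz(F,m,n). -/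
/-!
Theorem (uniform Kronecker quotients, (i)): a uniform left Kronecker quotient
`⊘` realized by the matrices `Q(A)` satisfies (Q1): `(A ⊘ M)ᵀ = Aᵀ ⊘ Mᵀ` for
all `m,n,s,t`, all nonzero `A ∈ M(F,m,n)` and all `M ∈ M(F,ms,nt)`, if and
only if `Q(Aᵀ) = (Q(A))ᵀ` for all `m,n` and all nonzero `A ∈ M(F,m,n)`.
-/

open Matrix
open scoped Kronecker

theorem uniform_kronecker_quotient_transpose_iff
    {F : Type*} [Field F]
    (q : ∀ (m n s t : ℕ), Matrix (Fin m) (Fin n) F →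
      Matrix (Fin m × Fin s) (Fin n × Fin t) F → Matrix (Fin s) (Fin t) F)
    (Q : ∀ (m n : ℕ), Matrix (Fin m) (Fin n) F → Matrix (Fin m) (Fin n) F)
    (hquot : ∀ (m n s t : ℕ) (A : Matrix (Fin m) (Fin n) F), A ≠ 0 →
      ∀ B : Matrix (Fin s) (Fin t) F, q m n s t A (A ⊗ₖ B) = B)
    (hQnz : ∀ (m n : ℕ) (A : Matrix (Fin m) (Fin n) F), A ≠ 0 → Q m n A ≠ 0)
    (hQone : ∀ (m n : ℕ) (A : Matrix (Fin m) (Fin n) F), A ≠ 0 →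
      pfrobS (Q m n A) A = 1)
    (hunif : ∀ (m n s t : ℕ) (A : Matrix (Fin m) (Fin n) F), A ≠ 0 →
      ∀ M : Matrix (Fin m × Fin s) (Fin n × Fin t) F,
        q m n s t A M = pfrob (Q m n A) M) :
    (∀ (m n s t : ℕ) (A : Matrix (Fin m) (Fin n) F), A ≠ 0 →
      ∀ M : Matrix (Fin m × Fin s) (Fin n × Fin t) F,
        (q m n s t A M)ᵀ = q n m t s Aᵀ Mᵀ) ↔
    (∀ (m n : ℕ) (A : Matrix (Fin m) (Fin n) F), A ≠ 0 →
      Q n m Aᵀ = (Q m n A)ᵀ) := by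
  constructor
  · intro h m n A hA
    have hAt : Aᵀ ≠ 0 := fun h0 => hA (by simpa using congrArg Matrix.transpose h0)
    ext k j
    have hM := h m n 1 1 A hA (Matrix.single (j, (0 : Fin 1)) (k, (0 : Fin 1)) (1 : F))
    rw [hunif m n 1 1 A hA, hunif n m 1 1 Aᵀ hAt] at hM
    have := congrFun (congrFun hM 0) 0
    simp only [pfrob, Matrix.transpose_apply, Matrix.of_apply, Matrix.single,
      Prod.mk.injEq] at this
    simpa [ite_and, Finset.sum_ite_eq, Finset.sum_ite_eq'] using this.symm
  · intro h m n s t A hA M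
    have hAt : Aᵀ ≠ 0 := fun h0 => hA (by simpa using congrArg Matrix.transpose h0)
    rw [hunif m n s t A hA, hunif n m t s Aᵀ hAt, h m n A hA]
    ext v u
    simp only [pfrob, Matrix.transpose_apply, Matrix.of_apply]
    rw [Finset.sum_comm]
end

section
/- Let ⊘ be a uniform left Kronecker quotient over a field F realized by the matrices Q(A). Then ⊘ satisfies A ⊘ (B ⊘ M) = (B⊗A) ⊘ M for all m,n,s,t,p,q ∈ ℕ, all A ∈ M_nz(F,m,n), all B ∈ M_nz(F,s,t) and all M ∈ M(F,smp,tnq) if and only if Q(B⊗A) = Q(B) ⊗ Q(A) for all A ∈ M_nz(F,m,n) and B ∈ M_nz(F,s,t). -/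
/-!
Theorem (uniform Kronecker quotients, (iii)): a uniform left Kronecker
quotient `⊘` realized by the matrices `Q(A)` satisfies (Q3):
`A ⊘ (B ⊘ M) = (B ⊗ A) ⊘ M` for all `m,n,s,t,p,q`, all nonzero
`A ∈ M(F,m,n)`, all nonzero `B ∈ M(F,s,t)` and all `M ∈ M(F,smp,tnq)`, if and
only if `Q(B ⊗ A) = Q(B) ⊗ Q(A)` for all such `A` and `B`.  An
`smp × tnq` matrix is encoded with rows indexed by `Fin s × (Fin m × Fin p)`;
the identifications `Fin s × Fin m ≃ Fin (s*m)` etc. are the standard ones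
(`finProdFinEquiv`, matching the row-major block indexing of the Kronecker
product).
-/

open Matrix
open scoped Kronecker

lemma pfrob_nest {F : Type*} [Field F] {s t m n p r : ℕ}
    (C : Matrix (Fin s) (Fin t) F) (D : Matrix (Fin m) (Fin n) F)
    (M : Matrix (Fin s × (Fin m × Fin p)) (Fin t × (Fin n × Fin r)) F) :
    pfrob D (Matrix.reindex (finProdFinEquiv (m := m) (n := p)).symm
      (finProdFinEquiv (m := n) (n := r)).symm
      (pfrob C (Matrix.reindex
        ((Equiv.refl (Fin s)).prodCongr (finProdFinEquiv (m := m) (n := p)))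
        ((Equiv.refl (Fin t)).prodCongr (finProdFinEquiv (m := n) (n := r))) M)))
    = pfrob (Matrix.reindex finProdFinEquiv finProdFinEquiv (C ⊗ₖ D))
      (Matrix.reindex
        ((Equiv.prodAssoc (Fin s) (Fin m) (Fin p)).symm.trans
          ((finProdFinEquiv (m := s) (n := m)).prodCongr (Equiv.refl (Fin p))))
        ((Equiv.prodAssoc (Fin t) (Fin n) (Fin r)).symm.trans
          ((finProdFinEquiv (m := t) (n := n)).prodCongr (Equiv.refl (Fin r)))) M) := by
  ext u v
  simp only [pfrob, of_apply, reindex_apply, submatrix_apply, Equiv.symm_symm,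
    Equiv.symm_apply_apply, Equiv.prodCongr_apply, Equiv.coe_refl, Prod.map]
  have h1 : ∀ f : Fin (s * m) → F, ∑ x, f x = ∑ a, ∑ j, f (finProdFinEquiv (a, j)) := by
    intro f
    rw [← Equiv.sum_comp (finProdFinEquiv (m := s) (n := m)), Fintype.sum_prod_type]
  have h2 : ∀ f : Fin (t * n) → F, ∑ x, f x = ∑ b, ∑ k, f (finProdFinEquiv (b, k)) := by
    intro f
    rw [← Equiv.sum_comp (finProdFinEquiv (m := t) (n := n)), Fintype.sum_prod_type]
  rw [h1]
  simp only [h2, Equiv.symm_apply_apply, Equiv.symm_trans_apply, Equiv.prodCongr_symm,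
    Equiv.prodCongr_apply, Equiv.coe_refl, Prod.map, Equiv.symm_symm, Equiv.prodAssoc_apply,
    kroneckerMap_apply, id_eq]
  conv_rhs => rw [Finset.sum_comm]
  refine Finset.sum_congr rfl fun j _ => ?_
  simp only [Finset.mul_sum]
  conv_lhs => rw [Finset.sum_comm]
  refine Finset.sum_congr rfl fun a _ => ?_
  conv_lhs => rw [Finset.sum_comm]
  refine Finset.sum_congr rfl fun b _ => Finset.sum_congr rfl fun k _ => ?_
  simp only [Equiv.refl_symm, Equiv.refl_apply]
  ring

lemma reindex_ne_zero {F : Type*} [Field F] {I J I' J' : Type*}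
    (e : I ≃ I') (f : J ≃ J') {A : Matrix I J F} (hA : A ≠ 0) :
    Matrix.reindex e f A ≠ 0 := by
  intro h
  apply hA
  ext i j
  have := congrFun (congrFun h (e i)) (f j)
  simpa using this

lemma kron_ne_zero {F : Type*} [Field F] {I J S T : Type*} [Fintype I] [Fintype J]
    {A : Matrix I J F} {B : Matrix S T F} (hA : A ≠ 0) (hB : B ≠ 0) :
    A ⊗ₖ B ≠ 0 := by
  obtain ⟨i, j, hij⟩ : ∃ i j, A i j ≠ 0 := by
    by_contra h; push_neg at h; exact hA (by ext i j; simpa using h i j)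
  obtain ⟨a, b, hab⟩ : ∃ a b, B a b ≠ 0 := by
    by_contra h; push_neg at h; exact hB (by ext a b; simpa using h a b)
  intro h
  have := congrFun (congrFun h (i, a)) (j, b)
  simp only [kroneckerMap_apply, Matrix.zero_apply] at this
  rcases mul_eq_zero.mp this with h' | h'
  · exact hij h'
  · exact hab h'

lemma pfrob_single {F : Type*} [Field F] {I J : Type*} [Fintype I] [Fintype J]
    [DecidableEq I] [DecidableEq J]
    (C : Matrix I J F) (x0 : I) (y0 : J) (u : Fin 1) (v : Fin 1) :
    pfrob C (Matrix.of fun (xu : I × Fin 1) (yv : J × Fin 1) =>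
      if xu.1 = x0 ∧ yv.1 = y0 then (1 : F) else 0) u v = C x0 y0 := by
  simp [pfrob, Finset.mul_sum, ite_and, mul_ite, Finset.sum_ite_eq', Finset.sum_ite_eq]

theorem uniform_kronecker_quotient_iterated_iff
    {F : Type*} [Field F]
    (q : ∀ (m n s t : ℕ), Matrix (Fin m) (Fin n) F →
      Matrix (Fin m × Fin s) (Fin n × Fin t) F → Matrix (Fin s) (Fin t) F)
    (Q : ∀ (m n : ℕ), Matrix (Fin m) (Fin n) F → Matrix (Fin m) (Fin n) F)
    (hquot : ∀ (m n s t : ℕ) (A : Matrix (Fin m) (Fin n) F), A ≠ 0 →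
      ∀ B : Matrix (Fin s) (Fin t) F, q m n s t A (A ⊗ₖ B) = B)
    (hQnz : ∀ (m n : ℕ) (A : Matrix (Fin m) (Fin n) F), A ≠ 0 → Q m n A ≠ 0)
    (hQone : ∀ (m n : ℕ) (A : Matrix (Fin m) (Fin n) F), A ≠ 0 →
      pfrobS (Q m n A) A = 1)
    (hunif : ∀ (m n s t : ℕ) (A : Matrix (Fin m) (Fin n) F), A ≠ 0 →
      ∀ M : Matrix (Fin m × Fin s) (Fin n × Fin t) F,
        q m n s t A M = pfrob (Q m n A) M) :
    (∀ (m n s t p r : ℕ)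
      (A : Matrix (Fin m) (Fin n) F) (B : Matrix (Fin s) (Fin t) F),
      A ≠ 0 → B ≠ 0 →
      ∀ M : Matrix (Fin s × (Fin m × Fin p)) (Fin t × (Fin n × Fin r)) F,
        q m n p r A
          (Matrix.reindex
            (finProdFinEquiv (m := m) (n := p)).symm
            (finProdFinEquiv (m := n) (n := r)).symm
            (q s t (m * p) (n * r) B
              (Matrix.reindex
                ((Equiv.refl (Fin s)).prodCongr (finProdFinEquiv (m := m) (n := p)))
                ((Equiv.refl (Fin t)).prodCongr (finProdFinEquiv (m := n) (n := r)))
                M))) =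
        q (s * m) (t * n) p r
          (Matrix.reindex finProdFinEquiv finProdFinEquiv (B ⊗ₖ A))
          (Matrix.reindex
            ((Equiv.prodAssoc (Fin s) (Fin m) (Fin p)).symm.trans
              ((finProdFinEquiv (m := s) (n := m)).prodCongr (Equiv.refl (Fin p))))
            ((Equiv.prodAssoc (Fin t) (Fin n) (Fin r)).symm.trans
              ((finProdFinEquiv (m := t) (n := n)).prodCongr (Equiv.refl (Fin r))))
            M)) ↔
    (∀ (m n s t : ℕ)
      (A : Matrix (Fin m) (Fin n) F) (B : Matrix (Fin s) (Fin t) F),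
      A ≠ 0 → B ≠ 0 →
      Q (s * m) (t * n) (Matrix.reindex finProdFinEquiv finProdFinEquiv (B ⊗ₖ A)) =
        Matrix.reindex finProdFinEquiv finProdFinEquiv (Q s t B ⊗ₖ Q m n A)) := by
  constructor
  · intro H m n s t A B hA hB
    have hBA : Matrix.reindex finProdFinEquiv finProdFinEquiv (B ⊗ₖ A) ≠ 0 :=
      reindex_ne_zero _ _ (kron_ne_zero hB hA)
    ext x y
    set e₁ := (Equiv.prodAssoc (Fin s) (Fin m) (Fin 1)).symm.trans
      ((finProdFinEquiv (m := s) (n := m)).prodCongr (Equiv.refl (Fin 1)))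
    set e₂ := (Equiv.prodAssoc (Fin t) (Fin n) (Fin 1)).symm.trans
      ((finProdFinEquiv (m := t) (n := n)).prodCongr (Equiv.refl (Fin 1)))
    set M' : Matrix (Fin (s * m) × Fin 1) (Fin (t * n) × Fin 1) F :=
      Matrix.of fun (xu : Fin (s * m) × Fin 1) (yv : Fin (t * n) × Fin 1) =>
        if xu.1 = x ∧ yv.1 = y then (1 : F) else 0 with hM'
    have key := H m n s t 1 1 A B hA hB ((Matrix.reindex e₁ e₂).symm M')
    rw [hunif _ _ _ _ B hB, hunif _ _ _ _ A hA, hunif _ _ _ _ _ hBA,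
      pfrob_nest (Q s t B) (Q m n A)] at key
    rw [Equiv.apply_symm_apply] at key
    have := congrFun (congrFun key 0) 0
    rw [pfrob_single, pfrob_single] at this
    exact this.symm
  · intro H m n s t p r A B hA hB M
    have hBA : Matrix.reindex finProdFinEquiv finProdFinEquiv (B ⊗ₖ A) ≠ 0 :=
      reindex_ne_zero _ _ (kron_ne_zero hB hA)
    rw [hunif _ _ _ _ B hB, hunif _ _ _ _ A hA, hunif _ _ _ _ _ hBA,
      H m n s t A B hA hB, pfrob_nest (Q s t B) (Q m n A)]
end

section
/- Let ⊘ be a uniform left Kronecker quotient over a field F realized by the matrices Q(A). Then ⊘ satisfies tr(M) = tr(A) · tr(A ⊘ M) for all m,s ∈ ℕ, all A ∈ M_nz(F,m,m) with tr(A) ≠ 0 and all M ∈ M(F,ms,ms), if and only if Q(A) = (1/tr(A)) · I_m for all m and all A ∈ M_nz(F,m,m) with tr(A) ≠ 0. -/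
/-!
Theorem: a uniform left Kronecker quotient `⊘` realized by the matrices `Q(A)`
satisfies the restricted trace property (Q5'):
`tr M = tr A * tr (A ⊘ M)` for all `m, s`, all nonzero `A ∈ M(F,m,m)` with
`tr A ≠ 0` and all `M ∈ M(F,ms,ms)`, if and only if
`Q(A) = (tr A)⁻¹ • I_m` for all `m` and all nonzero `A ∈ M(F,m,m)` with
`tr A ≠ 0`.
-/

open Matrix
open scoped Kronecker

theorem uniform_kronecker_quotient_trace_iff
    {F : Type*} [Field F]
    (q : ∀ (m n s t : ℕ), Matrix (Fin m) (Fin n) F →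
      Matrix (Fin m × Fin s) (Fin n × Fin t) F → Matrix (Fin s) (Fin t) F)
    (Q : ∀ (m n : ℕ), Matrix (Fin m) (Fin n) F → Matrix (Fin m) (Fin n) F)
    (hquot : ∀ (m n s t : ℕ) (A : Matrix (Fin m) (Fin n) F), A ≠ 0 →
      ∀ B : Matrix (Fin s) (Fin t) F, q m n s t A (A ⊗ₖ B) = B)
    (hQnz : ∀ (m n : ℕ) (A : Matrix (Fin m) (Fin n) F), A ≠ 0 → Q m n A ≠ 0)
    (hQone : ∀ (m n : ℕ) (A : Matrix (Fin m) (Fin n) F), A ≠ 0 →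
      pfrobS (Q m n A) A = 1)
    (hunif : ∀ (m n s t : ℕ) (A : Matrix (Fin m) (Fin n) F), A ≠ 0 →
      ∀ M : Matrix (Fin m × Fin s) (Fin n × Fin t) F,
        q m n s t A M = pfrob (Q m n A) M) :
    (∀ (m s : ℕ) (A : Matrix (Fin m) (Fin m) F), A ≠ 0 → A.trace ≠ 0 →
      ∀ M : Matrix (Fin m × Fin s) (Fin m × Fin s) F,
        M.trace = A.trace * (q m m s s A M).trace) ↔
    (∀ (m : ℕ) (A : Matrix (Fin m) (Fin m) F), A ≠ 0 → A.trace ≠ 0 →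
      Q m m A = (A.trace)⁻¹ • (1 : Matrix (Fin m) (Fin m) F)) := by

  constructor
  · intro h m A hA htr
    ext j k
    have hM := h m 1 A hA htr
      (Matrix.of fun p q' => if p.1 = j ∧ q'.1 = k then (1:F) else 0)
    rw [hunif m m 1 1 A hA] at hM
    have h1 : (Matrix.of fun (p q' : Fin m × Fin 1) =>
        if p.1 = j ∧ q'.1 = k then (1:F) else 0).trace
        = if j = k then (1:F) else 0 := by
      simp only [Matrix.trace, Matrix.diag, Matrix.of_apply, Fintype.sum_prod_type]
      by_cases hjk : j = k <;>
        simp [hjk, ite_and, Finset.sum_ite_eq', eq_comm (a := k)]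
    have h2 : (pfrob (Q m m A) (Matrix.of fun (p q' : Fin m × Fin 1) =>
        if p.1 = j ∧ q'.1 = k then (1:F) else 0)).trace = Q m m A j k := by
      simp only [Matrix.trace, Matrix.diag, pfrob, Matrix.of_apply,
        Fintype.sum_prod_type]
      simp [mul_ite, ite_and, Finset.sum_ite_eq']
    rw [h1, h2] at hM
    have : Q m m A j k = (A.trace)⁻¹ * (if j = k then (1:F) else 0) := by
      field_simp
      rw [mul_comm]
      exact hM.symm
    simpa [Matrix.one_apply] using this
  · intro h m s A hA htr M
    rw [hunif m m s s A hA, h m A hA htr]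
    have : (pfrob ((A.trace)⁻¹ • (1 : Matrix (Fin m) (Fin m) F)) M).trace
        = (A.trace)⁻¹ * M.trace := by
      simp only [Matrix.trace, Matrix.diag, pfrob, Matrix.of_apply,
        Matrix.smul_apply, Matrix.one_apply, smul_eq_mul, Fintype.sum_prod_type]
      rw [Finset.mul_sum]
      rw [Finset.sum_comm]
      refine Finset.sum_congr rfl fun u _ => ?_
      rw [Finset.mul_sum]
      refine Finset.sum_congr rfl fun j _ => ?_
      simp [ite_mul, mul_ite, Finset.sum_ite_eq, mul_assoc]
    rw [this, ← mul_assoc, mul_inv_cancel₀ htr, one_mul]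
end

section
/- Let F be a field of characteristic zero. There is no family of matrices Q(A) ∈ M_nz(F,m,n) (defined for all m,n ∈ ℕ and all A ∈ M_nz(F,m,n)) that simultaneously satisfies: (1) Q(B⊗A) = Q(B) ⊗ Q(A) for all nonzero matrices A and B; and (2) Q(A) = (1/tr(A)) · I_m for every square A ∈ M_nz(F,m,m) with tr(A) ≠ 0. (In particular, no uniform left Kronecker quotient satisfies both properties (Q3) and (TR): applying (1) and (2) to the 4×4 all-ones matrix written as the Kronecker product of two 2×2 all-ones matrices gives Q = (1/4)I_4, of rank 4, while writing it as the Kronecker product of the all-ones column 4-vector and all-ones row 4-vector gives a Kronecker product of a column and a row vector, of rank 1.) -/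
/-!
Theorem: over a field `F` of characteristic zero there is no family of nonzero
matrices `Q(A) ∈ M_nz(F,m,n)` (defined for all `m, n` and all nonzero
`A ∈ M(F,m,n)`) satisfying simultaneously

(1) `Q(B ⊗ A) = Q(B) ⊗ Q(A)` for all nonzero matrices `A` and `B`, and
(2) `Q(A) = (tr A)⁻¹ • I_m` for every nonzero square `A` with `tr A ≠ 0`.

The Kronecker products are identified with flat matrices via the standard
row-major equivalence `finProdFinEquiv : Fin s × Fin m ≃ Fin (s*m)`.
-/

open Matrix
open scoped Kronecker

theorem no_realization_with_Q3_and_TR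
    {F : Type*} [Field F] [CharZero F] :
    ¬ ∃ Q : ∀ (m n : ℕ), Matrix (Fin m) (Fin n) F → Matrix (Fin m) (Fin n) F,
        (∀ (m n : ℕ) (A : Matrix (Fin m) (Fin n) F), A ≠ 0 → Q m n A ≠ 0) ∧
        (∀ (m n s t : ℕ)
          (A : Matrix (Fin m) (Fin n) F) (B : Matrix (Fin s) (Fin t) F),
          A ≠ 0 → B ≠ 0 →
          Q (s * m) (t * n)
              (Matrix.reindex finProdFinEquiv finProdFinEquiv (B ⊗ₖ A)) =
            Matrix.reindex finProdFinEquiv finProdFinEquiv (Q s t B ⊗ₖ Q m n A)) ∧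
        (∀ (m : ℕ) (A : Matrix (Fin m) (Fin m) F), A ≠ 0 → A.trace ≠ 0 →
          Q m m A = (A.trace)⁻¹ • (1 : Matrix (Fin m) (Fin m) F)) := by
  rintro ⟨Q, -, hk, htr⟩
  classical
  set A : Matrix (Fin 4) (Fin 1) F := Matrix.of fun _ _ => 1 with hAdef
  set B : Matrix (Fin 1) (Fin 4) F := Matrix.of fun _ _ => 1 with hBdef
  have hA0 : A ≠ 0 := by
    intro h
    simpa [hAdef] using congrFun (congrFun h 0) 0
  have hB0 : B ≠ 0 := by
    intro h
    simpa [hBdef] using congrFun (congrFun h 0) 0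
  have hkey : Q 4 4 (Matrix.reindex finProdFinEquiv finProdFinEquiv (B ⊗ₖ A)) =
      Matrix.reindex finProdFinEquiv finProdFinEquiv (Q 1 4 B ⊗ₖ Q 4 1 A) :=
    hk 4 1 1 4 A B hA0 hB0
  set J : Matrix (Fin 4) (Fin 4) F :=
      (Matrix.reindex finProdFinEquiv finProdFinEquiv (B ⊗ₖ A) :
        Matrix (Fin (1 * 4)) (Fin (4 * 1)) F) with hJdef
  have hJone : ∀ i j : Fin 4, J i j = 1 := by
    intro i j
    simp [hJdef, hAdef, hBdef]
  have hJ0 : J ≠ 0 := by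
    intro h
    have := congrFun (congrFun h 0) 0
    rw [hJone 0 0] at this
    simp at this
  have htrJ : J.trace = 4 := by
    simp [Matrix.trace, Matrix.diag, hJone, Fin.sum_univ_four]
  have htrne : J.trace ≠ 0 := by
    rw [htrJ]; norm_num
  have hQJ : Q 4 4 J = (J.trace)⁻¹ • (1 : Matrix (Fin 4) (Fin 4) F) :=
    htr 4 J hJ0 htrne
  set C := Q 1 4 B with hC
  set D := Q 4 1 A with hD
  have hmain : (J.trace)⁻¹ • (1 : Matrix (Fin 4) (Fin 4) F) =
      Matrix.reindex finProdFinEquiv finProdFinEquiv (C ⊗ₖ D) := by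
    rw [← hQJ]; exact hkey
  -- entrywise consequence
  have hent : ∀ i j : Fin 4,
      (J.trace)⁻¹ * (if i = j then (1 : F) else 0) =
      C 0 (((@finProdFinEquiv 4 1).symm j).1) *
        D (((@finProdFinEquiv 1 4).symm i).2) 0 := by
    intro i j
    have := congrFun (congrFun hmain i) j
    rw [Matrix.smul_apply, Matrix.one_apply] at this
    rw [smul_eq_mul] at this
    rw [this]
    simp only [Matrix.reindex_apply, Matrix.submatrix_apply, Matrix.kroneckerMap_apply]
    congr 1
    · congr 1
      exact Subsingleton.elim _ _
    · congr 1
      exact Subsingleton.elim _ _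
  have tne : (J.trace)⁻¹ ≠ 0 := inv_ne_zero htrne
  have h00 := hent 0 0
  have h11 := hent 1 1
  have h01 := hent 0 1
  simp only [if_pos rfl, eq_self_iff_true, if_true, mul_one] at h00 h11
  rw [if_neg (by decide : (0 : Fin 4) ≠ 1), mul_zero] at h01
  have hc0 : D (((@finProdFinEquiv 1 4).symm (0 : Fin 4)).2) 0 ≠ 0 := by
    intro h
    rw [h, mul_zero] at h00
    exact tne h00
  have hd1 : C 0 (((@finProdFinEquiv 4 1).symm (1 : Fin 4)).1) ≠ 0 := by
    intro h
    rw [h, zero_mul] at h11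
    exact tne h11
  exact mul_ne_zero hd1 hc0 h01.symm
end

section
/- Let F be a field, let A ∈ M_nz(F,m,n), and let W ∈ M(F,m,n) satisfy Σ_{(i,j)∈nz(A)} W_{i,j} = 1. Then for every B ∈ M(F,s,t): Σ_{(i,j)∈nz(A)} W_{i,j} · (A⊗B)_{i,j} / A_{i,j} = B, where (A⊗B)_{i,j} denotes the s×t block of A⊗B in block row i and block column j (that is, the entries (A⊗B)_{(i-1)s+u,(j-1)t+v} for 1≤u≤s, 1≤v≤t). In other words, every weighted average Kronecker quotient is a left Kronecker quotient. -/
/-!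
Theorem: let `A ∈ M_nz(F,m,n)` and let `W ∈ M(F,m,n)` satisfy
`∑_{(i,j) ∈ nz(A)} W_{i,j} = 1`.  Then for every `B ∈ M(F,s,t)`:
`∑_{(i,j) ∈ nz(A)} (W_{i,j} / A_{i,j}) • ((A ⊗ B) block (i,j)) = B`,
i.e. every weighted average Kronecker quotient is a left Kronecker quotient.
-/

open Matrix
open scoped Kronecker

theorem weighted_average_left_kronecker_quotient
    {F : Type*} [Field F] [DecidableEq F]
    {m n s t : ℕ}
    (A : Matrix (Fin m) (Fin n) F) (hA : A ≠ 0)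
    (W : Matrix (Fin m) (Fin n) F)
    (hW : ∑ ij ∈ Finset.univ.filter (fun ij : Fin m × Fin n => A ij.1 ij.2 ≠ 0),
      W ij.1 ij.2 = 1)
    (B : Matrix (Fin s) (Fin t) F) :
    ∑ ij ∈ Finset.univ.filter (fun ij : Fin m × Fin n => A ij.1 ij.2 ≠ 0),
      (W ij.1 ij.2 / A ij.1 ij.2) •
        (Matrix.of fun (u : Fin s) (v : Fin t) => (A ⊗ₖ B) (ij.1, u) (ij.2, v)) = B := by
  ext u v
  rw [Matrix.sum_apply]
  have : ∀ ij ∈ Finset.univ.filter (fun ij : Fin m × Fin n => A ij.1 ij.2 ≠ 0),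
      ((W ij.1 ij.2 / A ij.1 ij.2) •
        (Matrix.of fun (u : Fin s) (v : Fin t) => (A ⊗ₖ B) (ij.1, u) (ij.2, v))) u v
      = W ij.1 ij.2 * B u v := by
    intro ij hij
    have h : A ij.1 ij.2 ≠ 0 := (Finset.mem_filter.mp hij).2
    simp [kroneckerMap_apply, smul_eq_mul]
    field_simp
  rw [Finset.sum_congr rfl this, ← Finset.sum_mul, hW, one_mul]
end
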